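/- Set e_i = (1/n)·Σ_{j=0}^{n−1} q^{−ij} g^j in H_n(q) for 0 ≤ i ≤ n−1. Then the e_i are orthogonal idempotents summing to 1, g·e_i = q^i e_i, h^{n−1} e_i ≠ 0, each left ideal H_n(q)e_i is isomorphic to M(n,i) as an H_n(q)-module, and the left regular module decomposes as H_n(q) ≅ ⊕_{i=0}^{n−1} M(n,i). -/

import Mathlib

open scoped TensorProduct

/-- The defining relations of the Taft algebra: `g^n = 1`, `h^n = 0`, `hg = q·gh`,
where `g` (resp. `h`) is the free generator indexed by `true` (resp. `false`). -/
inductive TaftRel (k : Type) [Field k] (q : k) (n : ℕ) :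
    FreeAlgebra k Bool → FreeAlgebra k Bool → Prop
  | g_pow : TaftRel k q n (FreeAlgebra.ι k true ^ n) 1
  | h_pow : TaftRel k q n (FreeAlgebra.ι k false ^ n) 0
  | h_g : TaftRel k q n (FreeAlgebra.ι k false * FreeAlgebra.ι k true)
      (q • (FreeAlgebra.ι k true * FreeAlgebra.ι k false))

/-- The Taft algebra `H_n(q)`: the `k`-algebra generated by `g, h` subject to
`g^n = 1`, `h^n = 0`, `hg = q·gh`. -/
abbrev TaftAlgebra (k : Type) [Field k] (q : k) (n : ℕ) : Type :=
  RingQuot (TaftRel k q n)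

/-- The generator `g` of the Taft algebra. -/
noncomputable def taftG (k : Type) [Field k] (q : k) (n : ℕ) : TaftAlgebra k q n :=
  RingQuot.mkAlgHom k (TaftRel k q n) (FreeAlgebra.ι k true)

/-- The generator `h` of the Taft algebra. -/
noncomputable def taftH (k : Type) [Field k] (q : k) (n : ℕ) : TaftAlgebra k q n :=
  RingQuot.mkAlgHom k (TaftRel k q n) (FreeAlgebra.ι k false)

/-!
The `e_i` are the spectral projections of `g`: since `∑_{j<n} q^{(m-i)j}` is `n` or `0` according
as `n ∣ m - i`, every `g`-eigenvector `x` of eigenvalue `q^m` satisfies `e_i x = [n ∣ m - i] x`.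
Together with `g e_i = q^i e_i` (a telescoping sum, using `g^n = 1`) this gives the orthogonality
relations, and `∑ e_i = 1` is the same character sum read the other way.

The `n²` elements `h^j e_i` span `H_n(q)`: their span contains `1 = ∑ e_i` and is stable under
left multiplication by `g` (as `g h^j e_i = q^{i-j} h^j e_i`) and by `h`. They are linearly
independent because on `M(n, i)` the element `h^j e_{i'}` sends `v_1` to `δ_{i i'} v_{j+1}`.
Hence they form a basis on which `g` and `h` act as on `⊕_i M(n, i)`, and right multiplication
by `e_i` picks out the vectors `h^j e_i`, a basis of `H_n(q) e_i`.
-/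

theorem natCast_dvd_sub_iff_eq_of_lt {n i j : ℕ} (hi : i < n) (hj : j < n) :
    (n : ℤ) ∣ (j : ℤ) - i ↔ i = j :=
  ⟨fun h => (Nat.modEq_iff_dvd.2 h).eq_of_lt_of_lt hi hj, fun h => by simp [h]⟩

section FourierIdempotent

variable {k A : Type*} [Field k] [Ring A] [Algebra k A]

noncomputable def fourierIdempotent (q : k) (n : ℕ) (g : A) (i : ℕ) : A :=
  (n : k)⁻¹ • ∑ j ∈ Finset.range n, q ^ (-((i * j : ℕ) : ℤ)) • g ^ j

theorem IsPrimitiveRoot.sum_range_pow_zpow {q : k} {n : ℕ} (hq : IsPrimitiveRoot q n) (z : ℤ) :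
    ∑ j ∈ Finset.range n, (q ^ z) ^ j = if (n : ℤ) ∣ z then (n : k) else 0 := by
  split_ifs with hz
  · simp [(hq.zpow_eq_one_iff_dvd z).2 hz]
  · have hpow : (q ^ z) ^ n = 1 := by
      rw [← zpow_natCast, ← zpow_mul, mul_comm, zpow_mul, zpow_natCast, hq.pow_eq_one, one_zpow]
    rw [geom_sum_eq (mt (hq.zpow_eq_one_iff_dvd z).1 hz), hpow, sub_self, zero_div]

theorem AlgHom.map_fourierIdempotent {B : Type*} [Ring B] [Algebra k B] (f : A →ₐ[k] B)
    (q : k) (n : ℕ) (g : A) (i : ℕ) :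
    f (fourierIdempotent q n g i) = fourierIdempotent q n (f g) i := by
  simp [fourierIdempotent, map_sum, map_smul, map_pow]

variable {q : k} {n : ℕ} {g : A}

theorem fourierIdempotent_smul_of_smul_eq {M : Type*} [AddCommGroup M] [Module A M] [Module k M]
    [IsScalarTower k A M] [NeZero n] (hq : IsPrimitiveRoot q n) {x : M} {m : ℤ}
    (hx : g • x = q ^ m • x) (i : ℕ) :
    fourierIdempotent q n g i • x = if (n : ℤ) ∣ m - i then x else 0 := by
  have hpow : ∀ j : ℕ, g ^ j • x = (q ^ m) ^ j • x := by
    intro j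
    induction j with
    | zero => simp
    | succ j ih => rw [pow_succ', mul_smul, ih, smul_comm, hx, smul_smul, ← pow_succ]
  have hq0 : q ≠ 0 := hq.ne_zero (NeZero.ne n)
  have hn : (n : k) ≠ 0 := (hq.neZero').out
  have hcoef : ∀ j : ℕ, q ^ (-((i * j : ℕ) : ℤ)) * (q ^ m) ^ j = (q ^ (m - i)) ^ j := by
    intro j
    rw [← zpow_natCast (q ^ m), ← zpow_natCast (q ^ (m - i)), ← zpow_mul, ← zpow_mul,
      ← zpow_add₀ hq0]
    push_cast
    ring_nf
  calc fourierIdempotent q n g i • x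
      = (n : k)⁻¹ • (∑ j ∈ Finset.range n, (q ^ (m - i)) ^ j) • x := by
        simp only [fourierIdempotent, smul_assoc, Finset.sum_smul, hpow, smul_smul, hcoef]
    _ = if (n : ℤ) ∣ m - i then x else 0 := by
        rw [hq.sum_range_pow_zpow]
        split_ifs <;> simp [smul_smul, hn]

theorem mul_fourierIdempotent [NeZero n] (hq : q ^ n = 1) (hg : g ^ n = 1) (i : ℕ) :
    g * fourierIdempotent q n g i = q ^ i • fourierIdempotent q n g i := by
  set f : ℕ → A := fun j => q ^ (-((i * j : ℕ) : ℤ)) • g ^ j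
  have hq0 : q ≠ 0 := ne_zero_pow (NeZero.ne n) (by simp [hq])
  have hshift : ∀ j, g * f j = q ^ i • f (j + 1) := by
    intro j
    simp only [f, mul_smul_comm, smul_smul, ← pow_succ']
    congr 1
    rw [← zpow_natCast, ← zpow_add₀ hq0]
    push_cast
    ring_nf
  have hperiod : f n = f 0 := by
    simp [f, hg, mul_comm i, zpow_mul, hq]
  have he : fourierIdempotent q n g i = (n : k)⁻¹ • ∑ j ∈ Finset.range n, f j := rfl
  rw [← sub_eq_zero, he, mul_smul_comm, Finset.mul_sum, smul_comm (q ^ i), ← smul_sub]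
  simp only [hshift, ← Finset.smul_sum, ← Finset.sum_sub_distrib, ← smul_sub,
    Finset.sum_range_sub, hperiod, sub_self, smul_zero]

theorem fourierIdempotent_mul_fourierIdempotent [NeZero n] (hq : IsPrimitiveRoot q n)
    (hg : g ^ n = 1) {i j : ℕ} (hi : i < n) (hj : j < n) :
    fourierIdempotent q n g i * fourierIdempotent q n g j =
      if i = j then fourierIdempotent q n g i else 0 := by
  have hgj : g • fourierIdempotent q n g j = q ^ (j : ℤ) • fourierIdempotent q n g j := by
    rw [smul_eq_mul, mul_fourierIdempotent hq.pow_eq_one hg, zpow_natCast]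
  rw [← smul_eq_mul, fourierIdempotent_smul_of_smul_eq hq hgj,
    if_congr (natCast_dvd_sub_iff_eq_of_lt hi hj) rfl rfl]
  split_ifs with hij
  · rw [hij]
  · rfl

theorem sum_fourierIdempotent [NeZero n] (hq : IsPrimitiveRoot q n) :
    ∑ i ∈ Finset.range n, fourierIdempotent q n g i = 1 := by
  have hn : (n : k) ≠ 0 := hq.neZero'.out
  have hcoef : ∀ j ∈ Finset.range n,
      ∑ i ∈ Finset.range n, q ^ (-((i * j : ℕ) : ℤ)) = if j = 0 then (n : k) else 0 := by
    intro j hj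
    have hpow : ∀ i : ℕ, q ^ (-((i * j : ℕ) : ℤ)) = (q ^ (-(j : ℤ))) ^ i := by
      intro i
      rw [← zpow_natCast, ← zpow_mul]
      push_cast
      ring_nf
    simp_rw [hpow]
    have hdvd : (n : ℤ) ∣ -j ↔ j = 0 := by
      rw [Int.dvd_neg, Int.natCast_dvd_natCast]
      exact ⟨fun h => Nat.eq_zero_of_dvd_of_lt h (Finset.mem_range.1 hj), fun h => h ▸ dvd_zero n⟩
    rw [hq.sum_range_pow_zpow, if_congr hdvd rfl rfl]
  calc ∑ i ∈ Finset.range n, fourierIdempotent q n g i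
      = (n : k)⁻¹ • ∑ j ∈ Finset.range n,
          (∑ i ∈ Finset.range n, q ^ (-((i * j : ℕ) : ℤ))) • g ^ j := by
        simp only [fourierIdempotent, ← Finset.smul_sum, Finset.sum_smul]
        rw [Finset.sum_comm]
    _ = 1 := by
        rw [Finset.sum_congr rfl fun j hj => by rw [hcoef j hj]]
        simp [ite_smul, hn, NeZero.ne n]

end FourierIdempotent

namespace TaftAlgebra

variable {k : Type} [Field k] {q : k} {n : ℕ}

theorem taftG_pow : taftG k q n ^ n = 1 := by
  simpa only [map_pow, map_one, taftG] using RingQuot.mkAlgHom_rel k (@TaftRel.g_pow k _ q n)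

theorem taftH_pow : taftH k q n ^ n = 0 := by
  simpa only [map_pow, map_zero, taftH] using RingQuot.mkAlgHom_rel k (@TaftRel.h_pow k _ q n)

theorem taftH_mul_taftG : taftH k q n * taftG k q n = q • (taftG k q n * taftH k q n) := by
  simpa only [map_mul, map_smul, taftG, taftH] using RingQuot.mkAlgHom_rel k (@TaftRel.h_g k _ q n)

theorem taftH_pow_mul_taftG (b : ℕ) :
    taftH k q n ^ b * taftG k q n = q ^ b • (taftG k q n * taftH k q n ^ b) := by
  induction b with
  | zero => simp
  | succ b ih =>
    rw [pow_succ', mul_assoc, ih, mul_smul_comm, ← mul_assoc, taftH_mul_taftG, smul_mul_assoc,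
      smul_smul, ← pow_succ, mul_assoc]

noncomputable def lift {A : Type*} [Semiring A] [Algebra k A] (a b : A) (ha : a ^ n = 1)
    (hb : b ^ n = 0) (hba : b * a = q • (a * b)) : TaftAlgebra k q n →ₐ[k] A :=
  RingQuot.liftAlgHom k ⟨FreeAlgebra.lift k fun x => if x then a else b, fun _ _ h => by
    cases h <;> simp [ha, hb, hba]⟩

section lift

variable {A : Type*} [Semiring A] [Algebra k A] {a b : A} (ha : a ^ n = 1) (hb : b ^ n = 0)
  (hba : b * a = q • (a * b))

@[simp]
theorem lift_taftG : lift a b ha hb hba (taftG k q n) = a := by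
  simp [lift, taftG]

@[simp]
theorem lift_taftH : lift a b ha hb hba (taftH k q n) = b := by
  simp [lift, taftH]

end lift

theorem submodule_eq_top_of_one_mem (S : Submodule k (TaftAlgebra k q n)) (h1 : 1 ∈ S)
    (hg : ∀ x ∈ S, taftG k q n * x ∈ S) (hh : ∀ x ∈ S, taftH k q n * x ∈ S) : S = ⊤ := by
  suffices h : ∀ y : FreeAlgebra k Bool, ∀ x ∈ S, RingQuot.mkAlgHom k (TaftRel k q n) y * x ∈ S by
    refine eq_top_iff.2 fun y _ => ?_
    obtain ⟨y, rfl⟩ := RingQuot.mkAlgHom_surjective k _ y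
    simpa using h y 1 h1
  intro y
  induction y using FreeAlgebra.induction with
  | grade0 r =>
    intro x hx
    simpa [Algebra.smul_def] using S.smul_mem r hx
  | grade1 b =>
    cases b
    · exact hh
    · exact hg
  | mul a b ha hb =>
    intro x hx
    rw [map_mul, mul_assoc]
    exact ha _ (hb x hx)
  | add a b ha hb =>
    intro x hx
    rw [map_add, add_mul]
    exact S.add_mem (ha x hx) (hb x hx)

end TaftAlgebra

namespace TaftModule

variable {k : Type} [Field k] (q : k) (i : ℤ) (l : ℕ)

-- `x : Fin l → k` stands for `∑ j, x j • v_{j+1}` in `M(l, i)`.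
noncomputable def gEnd : Module.End k (Fin l → k) :=
  LinearMap.pi fun j => q ^ (i - j) • LinearMap.proj j

noncomputable def hEnd : Module.End k (Fin l → k) :=
  LinearMap.pi fun j => if h : 0 < (j : ℕ) then LinearMap.proj ⟨j - 1, by omega⟩ else 0

variable {q i l}

theorem gEnd_apply (x : Fin l → k) (j : Fin l) : gEnd q i l x j = q ^ (i - j) * x j := rfl

theorem hEnd_apply (x : Fin l → k) (j : Fin l) :
    hEnd l x j = if h : 0 < (j : ℕ) then x ⟨j - 1, by omega⟩ else 0 := by
  simp only [hEnd, LinearMap.pi_apply]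
  split_ifs <;> rfl

theorem gEnd_single (j : Fin l) (c : k) :
    gEnd q i l (Pi.single j c) = q ^ (i - j) • Pi.single j c := by
  ext j'
  by_cases h : j' = j
  · subst h; simp [gEnd_apply]
  · simp [gEnd_apply, h]

theorem gEnd_pow_apply (m : ℕ) (x : Fin l → k) (j : Fin l) :
    (gEnd q i l ^ m) x j = (q ^ (i - j)) ^ m * x j := by
  induction m with
  | zero => simp
  | succ m ih => rw [pow_succ', Module.End.mul_apply, gEnd_apply, ih, pow_succ', mul_assoc]

theorem gEnd_pow_eq_one {n : ℕ} (hq : q ^ n = 1) : gEnd q i l ^ n = 1 := by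
  refine LinearMap.ext fun x => funext fun j => ?_
  rw [gEnd_pow_apply, ← zpow_natCast, ← zpow_mul, mul_comm _ (n : ℤ), zpow_mul, zpow_natCast, hq,
    one_zpow, one_mul, Module.End.one_apply]

theorem hEnd_pow_apply (b : ℕ) (x : Fin l → k) (j : Fin l) :
    (hEnd l ^ b) x j = if h : b ≤ (j : ℕ) then x ⟨j - b, by omega⟩ else 0 := by
  induction b generalizing j with
  | zero => simp
  | succ b ih =>
    rw [pow_succ', Module.End.mul_apply, hEnd_apply]
    by_cases hj : 0 < (j : ℕ)
    · rw [dif_pos hj, ih]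
      by_cases hb : b + 1 ≤ (j : ℕ)
      · rw [dif_pos (by simp only; omega), dif_pos hb]
        congr 2
        simp only
        omega
      · rw [dif_neg (by simp only; omega), dif_neg hb]
    · rw [dif_neg hj, dif_neg (by omega)]

theorem hEnd_pow_eq_zero {n : ℕ} (hl : l ≤ n) : hEnd (k := k) l ^ n = 0 := by
  refine LinearMap.ext fun x => funext fun j => ?_
  rw [hEnd_pow_apply, dif_neg (by omega)]
  rfl

theorem hEnd_pow_single_zero [NeZero l] (j : Fin l) :
    (hEnd l ^ (j : ℕ)) (Pi.single 0 1) = Pi.single j (1 : k) := by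
  ext j'
  rw [hEnd_pow_apply]
  by_cases h : j' = j
  · subst h; simp [Pi.single_apply]
  · rw [Pi.single_eq_of_ne h]
    split_ifs with hle
    · exact Pi.single_eq_of_ne (fun h0 => h (Fin.ext (by simp [Fin.ext_iff] at h0; omega))) _
    · rfl

theorem hEnd_mul_gEnd (hq0 : q ≠ 0) : hEnd l * gEnd q i l = q • (gEnd q i l * hEnd l) := by
  refine LinearMap.ext fun x => funext fun j => ?_
  simp only [Module.End.mul_apply, LinearMap.smul_apply, Pi.smul_apply, smul_eq_mul, hEnd_apply,
    gEnd_apply]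
  split_ifs with hj
  · rw [← mul_assoc, ← zpow_one_add₀ hq0]
    congr 2
    push_cast [Nat.cast_sub (Nat.one_le_iff_ne_zero.2 hj.ne')]
    ring
  · simp

variable (i l)

noncomputable def rep {n : ℕ} (hq : q ^ n = 1) (hq0 : q ≠ 0) (hl : l ≤ n) :
    TaftAlgebra k q n →ₐ[k] Module.End k (Fin l → k) :=
  TaftAlgebra.lift (gEnd q i l) (hEnd l) (gEnd_pow_eq_one hq) (hEnd_pow_eq_zero hl)
    (hEnd_mul_gEnd hq0)

end TaftModule

theorem Submodule.exists_basis_coe_eq {R M ι : Type*} [Semiring R] [AddCommMonoid M] [Module R M]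
    {v : ι → M} (hv : LinearIndependent R v) {N : Submodule R M}
    (hN : N = Submodule.span R (Set.range v)) :
    ∃ w : Module.Basis ι R N, ∀ j, (w j : M) = v j := by
  subst hN
  exact ⟨Module.Basis.span hv, fun j => by rw [Module.Basis.span_apply]⟩

namespace TaftAlgebra

open TaftModule

variable {k : Type} [Field k] {q : k} {n : ℕ}

noncomputable def basisVec (q : k) (n : ℕ) (p : Fin n × Fin n) : TaftAlgebra k q n :=
  taftH k q n ^ (p.2 : ℕ) * fourierIdempotent q n (taftG k q n) p.1

theorem taftH_mul_basisVec (p : Fin n × Fin n) :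
    taftH k q n * basisVec q n p =
      if h : (p.2 : ℕ) + 1 < n then basisVec q n (p.1, ⟨p.2 + 1, h⟩) else 0 := by
  rw [basisVec, ← mul_assoc, ← pow_succ']
  split_ifs with h
  · rfl
  · rw [show (p.2 : ℕ) + 1 = n by omega, taftH_pow, zero_mul]

variable [NeZero n]

theorem taftG_mul_basisVec (hq : IsPrimitiveRoot q n) (p : Fin n × Fin n) :
    taftG k q n * basisVec q n p = q ^ ((p.1 : ℕ) - (p.2 : ℤ)) • basisVec q n p := by
  have hq0 : q ≠ 0 := hq.ne_zero (NeZero.ne n)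
  have hcomm : taftG k q n * taftH k q n ^ (p.2 : ℕ) =
      (q ^ (p.2 : ℕ))⁻¹ • (taftH k q n ^ (p.2 : ℕ) * taftG k q n) := by
    rw [taftH_pow_mul_taftG, smul_smul, inv_mul_cancel₀ (pow_ne_zero _ hq0), one_smul]
  rw [basisVec, ← mul_assoc, hcomm, smul_mul_assoc, mul_assoc,
    mul_fourierIdempotent hq.pow_eq_one taftG_pow, mul_smul_comm, smul_smul, zpow_sub₀ hq0,
    zpow_natCast, zpow_natCast, div_eq_inv_mul]

theorem basisVec_mul_fourierIdempotent (hq : IsPrimitiveRoot q n) (p : Fin n × Fin n)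
    (i : Fin n) :
    basisVec q n p * fourierIdempotent q n (taftG k q n) i =
      if p.1 = i then basisVec q n p else 0 := by
  rw [basisVec, mul_assoc,
    fourierIdempotent_mul_fourierIdempotent hq taftG_pow p.1.isLt i.isLt]
  simp only [Fin.val_inj]
  split_ifs <;> simp

theorem rep_basisVec_single_zero (hq : IsPrimitiveRoot q n) (i : Fin n) (p : Fin n × Fin n) :
    rep i n hq.pow_eq_one (hq.ne_zero (NeZero.ne n)) le_rfl (basisVec q n p)
        (Pi.single 0 1) = if p.1 = i then Pi.single p.2 (1 : k) else 0 := by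
  have hg : gEnd q i n • (Pi.single 0 1 : Fin n → k) =
      q ^ ((i : ℕ) : ℤ) • Pi.single (0 : Fin n) (1 : k) := by
    simpa using gEnd_single (q := q) (i := i) (0 : Fin n) (1 : k)
  rw [basisVec, map_mul, map_pow, Module.End.mul_apply, AlgHom.map_fourierIdempotent, rep,
    lift_taftG, lift_taftH, ← Module.End.smul_def (fourierIdempotent _ _ _ _),
    fourierIdempotent_smul_of_smul_eq hq hg,
    if_congr (natCast_dvd_sub_iff_eq_of_lt p.1.isLt i.isLt) rfl rfl]
  simp only [Fin.val_inj]
  split_ifs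
  · exact hEnd_pow_single_zero p.2
  · exact map_zero (hEnd n ^ (p.2 : ℕ))

theorem linearIndependent_basisVec (hq : IsPrimitiveRoot q n) :
    LinearIndependent k (basisVec q n) := by
  let eval : TaftAlgebra k q n →ₗ[k] (Fin n × Fin n → k) := LinearMap.pi fun p =>
    LinearMap.proj p.2 ∘ₗ LinearMap.applyₗ (Pi.single 0 1) ∘ₗ
      (rep p.1 n hq.pow_eq_one (hq.ne_zero (NeZero.ne n)) le_rfl).toLinearMap
  have heval : eval ∘ basisVec q n = Pi.basisFun k (Fin n × Fin n) := by
    ext p p'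
    rw [Pi.basisFun_apply]
    change rep _ n _ _ _ (basisVec q n p) (Pi.single 0 1) p'.2 = _
    rw [rep_basisVec_single_zero hq]
    obtain ⟨i, j⟩ := p
    obtain ⟨i', j'⟩ := p'
    by_cases hi : i = i' <;> by_cases hj : j = j' <;> simp [hi, hj, eq_comm]
  exact LinearIndependent.of_comp eval (heval ▸ (Pi.basisFun k _).linearIndependent)

theorem span_basisVec (hq : IsPrimitiveRoot q n) :
    Submodule.span k (Set.range (basisVec q n)) = ⊤ := by
  set S := Submodule.span k (Set.range (basisVec q n))
  have hstable : ∀ a : TaftAlgebra k q n, (∀ p, a * basisVec q n p ∈ S) → ∀ x ∈ S, a * x ∈ S :=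
    fun a ha x hx => (Submodule.span_le (p := S.comap (LinearMap.mulLeft k a))).2
      (Set.range_subset_iff.2 ha) hx
  apply submodule_eq_top_of_one_mem
  · rw [← sum_fourierIdempotent hq (g := taftG k q n), ← Fin.sum_univ_eq_sum_range]
    exact Submodule.sum_mem _ fun i _ => Submodule.subset_span ⟨(i, 0), by simp [basisVec]⟩
  · refine hstable _ fun p => ?_
    rw [taftG_mul_basisVec hq]
    exact S.smul_mem _ (Submodule.subset_span ⟨p, rfl⟩)
  · refine hstable _ fun p => ?_
    rw [taftH_mul_basisVec]
    split_ifs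
    · exact Submodule.subset_span ⟨_, rfl⟩
    · exact S.zero_mem

noncomputable def regularBasis (hq : IsPrimitiveRoot q n) :
    Module.Basis (Fin n × Fin n) k (TaftAlgebra k q n) :=
  Module.Basis.mk (linearIndependent_basisVec hq) (span_basisVec hq).ge

@[simp]
theorem regularBasis_apply (hq : IsPrimitiveRoot q n) (p : Fin n × Fin n) :
    regularBasis hq p = basisVec q n p :=
  Module.Basis.mk_apply _ _ _

theorem range_mulRight_fourierIdempotent (hq : IsPrimitiveRoot q n) (i : Fin n) :
    LinearMap.range (LinearMap.mulRight k (fourierIdempotent q n (taftG k q n) i)) =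
      Submodule.span k (Set.range fun j => basisVec q n (i, j)) := by
  apply le_antisymm
  · rw [LinearMap.range_eq_map, ← span_basisVec hq, Submodule.map_span, Submodule.span_le]
    rintro _ ⟨_, ⟨p, rfl⟩, rfl⟩
    rw [SetLike.mem_coe, LinearMap.mulRight_apply, basisVec_mul_fourierIdempotent hq]
    split_ifs with h
    · exact Submodule.subset_span ⟨p.2, by rw [← h]⟩
    · exact Submodule.zero_mem _
  · rw [Submodule.span_le]
    rintro _ ⟨j, rfl⟩
    exact ⟨basisVec q n (i, j), by simp [basisVec_mul_fourierIdempotent hq]⟩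

end TaftAlgebra

/-- With `e_i = (1/n)·Σ_{j<n} q^{−ij} g^j`, the `e_i` are orthogonal
idempotents summing to `1`, `g e_i = q^i e_i`, `h^{n−1} e_i ≠ 0`, each left ideal
`H_n(q)e_i` has a standard basis making it a copy of `M(n,i)`, and the left regular
module has a basis exhibiting it as `⊕_{i<n} M(n,i)`. -/
theorem taft_regular_decomposition (k : Type) [Field k] (n : ℕ) (hn : 2 ≤ n) (q : k)
    (hq : IsPrimitiveRoot q n)
    (e : Fin n → TaftAlgebra k q n)
    (he : ∀ i : Fin n, e i = (n : k)⁻¹ •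
      ∑ j ∈ Finset.range n, q ^ (-(((i : ℕ) * j : ℕ) : ℤ)) • taftG k q n ^ j) :
    -- orthogonal idempotents summing to 1
    (∀ i j : Fin n, e i * e j = if i = j then e i else 0) ∧
    (∑ i : Fin n, e i = 1) ∧
    -- `g e_i = q^i e_i`
    (∀ i : Fin n, taftG k q n * e i = q ^ (i : ℕ) • e i) ∧
    -- `h^{n-1} e_i ≠ 0`
    (∀ i : Fin n, taftH k q n ^ (n - 1) * e i ≠ 0) ∧
    -- `H_n(q) e_i ≅ M(n,i)`: the left ideal `H e_i` has a standard `M(n,i)`-basis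
    (∀ i : Fin n, ∃ w : Module.Basis (Fin n) k
        ↥(LinearMap.range (LinearMap.mulRight k (e i) : TaftAlgebra k q n →ₗ[k] TaftAlgebra k q n)),
      (∀ j : Fin n, taftG k q n * (w j : TaftAlgebra k q n)
          = q ^ (((i : ℕ) : ℤ) - ((j : ℕ) : ℤ)) • (w j : TaftAlgebra k q n)) ∧
      (∀ j : Fin n, taftH k q n * (w j : TaftAlgebra k q n)
          = if h : (j : ℕ) + 1 < n then (w ⟨(j : ℕ) + 1, h⟩ : TaftAlgebra k q n) else 0)) ∧
    -- `H_n(q) ≅ ⊕_{i<n} M(n,i)` as left regular module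
    (∃ u : Module.Basis (Fin n × Fin n) k (TaftAlgebra k q n),
      (∀ p : Fin n × Fin n, taftG k q n * u p
          = q ^ (((p.1 : ℕ) : ℤ) - ((p.2 : ℕ) : ℤ)) • u p) ∧
      (∀ p : Fin n × Fin n, taftH k q n * u p
          = if h : (p.2 : ℕ) + 1 < n then u (p.1, ⟨(p.2 : ℕ) + 1, h⟩) else 0)) := by
  have : NeZero n := ⟨by omega⟩
  obtain rfl : e = fun i : Fin n => fourierIdempotent q n (taftG k q n) i := funext he
  beta_reduce
  refine ⟨fun i j => ?_, ?_, fun i => ?_, fun i => ?_, fun i => ?_, ?_⟩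
  · rw [fourierIdempotent_mul_fourierIdempotent hq TaftAlgebra.taftG_pow i.isLt j.isLt]
    simp only [Fin.val_inj]
  · rw [Fin.sum_univ_eq_sum_range (fourierIdempotent q n (taftG k q n)), sum_fourierIdempotent hq]
  · exact mul_fourierIdempotent hq.pow_eq_one TaftAlgebra.taftG_pow i
  · simpa [TaftAlgebra.basisVec] using (TaftAlgebra.regularBasis hq).ne_zero (i, ⟨n - 1, by omega⟩)
  · obtain ⟨w, hw⟩ := Submodule.exists_basis_coe_eq
      ((TaftAlgebra.linearIndependent_basisVec hq).comp _ (Prod.mk_right_injective i))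
      (TaftAlgebra.range_mulRight_fourierIdempotent hq i)
    refine ⟨w, fun j => ?_, fun j => ?_⟩
    · rw [hw]
      exact TaftAlgebra.taftG_mul_basisVec hq (i, j)
    · simp only [hw]
      exact TaftAlgebra.taftH_mul_basisVec (i, j)
  · refine ⟨TaftAlgebra.regularBasis hq, fun p => ?_, fun p => ?_⟩
    · simpa using TaftAlgebra.taftG_mul_basisVec hq p
    · simpa using TaftAlgebra.taftH_mul_basisVec p
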